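/- arXiv:2011.01797 — 3 statements merged into one kernel-verified Lean document; each statement's English description precedes it below -/
import Mathlib

section
/- Let x_1,…,x_n ∈ 𝒳, let δ_1,…,δ_n ∈ {0,1}, and let μ, μ̂, e, ê : 𝒳 → ℝ satisfy e(x) ≥ η > 0 and ê(x) ≥ ρ > 0 for all x. Then for all functions π_1, π_2 : 𝒳 → [0,1], (1/n) Σ_{i=1}^n δ_i (π_1(x_i) − π_2(x_i)) (μ̂(x_i) − μ(x_i)) (1/ê(x_i) − 1/e(x_i)) ≤ (ηρ)^{-1} · √((1/n) Σ_{i=1}^n (μ̂(x_i) − μ(x_i))²) · √((1/n) Σ_{i=1}^n (ê(x_i) − e(x_i))²). (The doubly robust cross-term bound S_j^{(3)}: the error is controlled by the product of the empirical estimation errors of μ̂ and ê; in the paper ρ = (K e^{2M})^{-1}, giving the factor η^{-1} K e^{2M}.) -/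
/-- The doubly robust cross-term bound `S_j^{(3)}`: the error is controlled by the product of the
empirical estimation errors of `μ̂` and `ê`; here `δ_i ∈ {0,1}` plays the role of the indicator
`1{a_i = A_j}`, `e(x) ≥ η` and `ê(x) ≥ ρ`. -/
theorem stmt_10
    {𝒳 : Type*} (n : ℕ) (hn : 0 < n)
    (η ρ : ℝ) (hη : 0 < η) (hρ : 0 < ρ)
    (x : Fin n → 𝒳) (δ : Fin n → ℝ) (hδ : ∀ i, δ i = 0 ∨ δ i = 1)
    (μ μh e eh : 𝒳 → ℝ)
    (he : ∀ z, η ≤ e z) (heh : ∀ z, ρ ≤ eh z)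
    (π₁ π₂ : 𝒳 → ℝ)
    (hπ₁ : ∀ z, π₁ z ∈ Set.Icc (0:ℝ) 1) (hπ₂ : ∀ z, π₂ z ∈ Set.Icc (0:ℝ) 1) :
    (1 / (n : ℝ)) * ∑ i, δ i * (π₁ (x i) - π₂ (x i)) * (μh (x i) - μ (x i)) *
        (1 / eh (x i) - 1 / e (x i)) ≤
      (η * ρ)⁻¹ * Real.sqrt ((1 / (n : ℝ)) * ∑ i, (μh (x i) - μ (x i)) ^ 2) *
        Real.sqrt ((1 / (n : ℝ)) * ∑ i, (eh (x i) - e (x i)) ^ 2) := by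
  have hnpos : (0:ℝ) < (n:ℝ) := by exact_mod_cast hn
  set a : Fin n → ℝ := fun i => |μh (x i) - μ (x i)| with ha
  set b : Fin n → ℝ := fun i => |eh (x i) - e (x i)| with hb
  have key : ∀ i, δ i * (π₁ (x i) - π₂ (x i)) * (μh (x i) - μ (x i)) *
      (1 / eh (x i) - 1 / e (x i)) ≤ (η * ρ)⁻¹ * (a i * b i) := by
    intro i
    have he' : 0 < e (x i) := lt_of_lt_of_le hη (he _)
    have heh' : 0 < eh (x i) := lt_of_lt_of_le hρ (heh _)
    have h1 : |δ i * (π₁ (x i) - π₂ (x i))| ≤ 1 := by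
      rw [abs_mul]
      have hd : |δ i| ≤ 1 := by rcases hδ i with h | h <;> simp [h]
      have hp : |π₁ (x i) - π₂ (x i)| ≤ 1 := by
        have h1' := hπ₁ (x i); have h2' := hπ₂ (x i)
        rw [Set.mem_Icc] at h1' h2'
        rw [abs_sub_le_iff]; constructor <;> linarith
      calc |δ i| * |π₁ (x i) - π₂ (x i)| ≤ 1 * 1 := by
            exact mul_le_mul hd hp (abs_nonneg _) zero_le_one
        _ = 1 := by ring
    have h2 : |1 / eh (x i) - 1 / e (x i)| ≤ (η * ρ)⁻¹ * b i := by
      have : 1 / eh (x i) - 1 / e (x i) = (e (x i) - eh (x i)) / (eh (x i) * e (x i)) := by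
        rw [one_div, one_div, inv_sub_inv (ne_of_gt heh') (ne_of_gt he')]
      rw [this, abs_div, abs_of_pos (mul_pos heh' he')]
      rw [div_le_iff₀ (mul_pos heh' he')]
      have hb' : |e (x i) - eh (x i)| = b i := by rw [hb]; exact abs_sub_comm _ _
      rw [hb']
      have hρη : (0:ℝ) < η * ρ := mul_pos hη hρ
      calc b i = (η * ρ)⁻¹ * b i * (η * ρ) := by field_simp
        _ ≤ (η * ρ)⁻¹ * b i * (eh (x i) * e (x i)) := by
            apply mul_le_mul_of_nonneg_left
            · calc η * ρ = ρ * η := by ring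
                _ ≤ eh (x i) * e (x i) := mul_le_mul (heh _) (he _) hη.le heh'.le
            · positivity
    calc δ i * (π₁ (x i) - π₂ (x i)) * (μh (x i) - μ (x i)) * (1 / eh (x i) - 1 / e (x i))
        ≤ |δ i * (π₁ (x i) - π₂ (x i)) * (μh (x i) - μ (x i)) * (1 / eh (x i) - 1 / e (x i))| :=
          le_abs_self _
      _ = |δ i * (π₁ (x i) - π₂ (x i))| * a i * |1 / eh (x i) - 1 / e (x i)| := by
          rw [abs_mul, abs_mul]
      _ ≤ 1 * a i * ((η * ρ)⁻¹ * b i) := by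
          apply mul_le_mul
          · exact mul_le_mul_of_nonneg_right h1 (abs_nonneg _)
          · exact h2
          · exact abs_nonneg _
          · positivity
      _ = (η * ρ)⁻¹ * (a i * b i) := by ring
  have hsum : ∑ i, δ i * (π₁ (x i) - π₂ (x i)) * (μh (x i) - μ (x i)) *
      (1 / eh (x i) - 1 / e (x i)) ≤ (η * ρ)⁻¹ * ∑ i, a i * b i := by
    rw [Finset.mul_sum]
    exact Finset.sum_le_sum fun i _ => key i
  have hcs : ∑ i, a i * b i ≤
      Real.sqrt (∑ i, (μh (x i) - μ (x i)) ^ 2) * Real.sqrt (∑ i, (eh (x i) - e (x i)) ^ 2) := by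
    have := Real.sum_mul_le_sqrt_mul_sqrt Finset.univ a b
    simpa [ha, hb, sq_abs] using this
  have hρη : (0:ℝ) < (η * ρ)⁻¹ := by positivity
  calc (1 / (n : ℝ)) * ∑ i, δ i * (π₁ (x i) - π₂ (x i)) * (μh (x i) - μ (x i)) *
        (1 / eh (x i) - 1 / e (x i))
      ≤ (1 / (n : ℝ)) * ((η * ρ)⁻¹ * (Real.sqrt (∑ i, (μh (x i) - μ (x i)) ^ 2) *
          Real.sqrt (∑ i, (eh (x i) - e (x i)) ^ 2))) := by
        apply mul_le_mul_of_nonneg_left _ (by positivity)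
        exact hsum.trans (mul_le_mul_of_nonneg_left hcs hρη.le)
    _ = (η * ρ)⁻¹ * (Real.sqrt (1 / (n:ℝ)) * Real.sqrt (∑ i, (μh (x i) - μ (x i)) ^ 2)) *
          (Real.sqrt (1 / (n:ℝ)) * Real.sqrt (∑ i, (eh (x i) - e (x i)) ^ 2)) := by
        have : Real.sqrt (1 / (n:ℝ)) * Real.sqrt (1 / (n:ℝ)) = 1 / (n:ℝ) :=
          Real.mul_self_sqrt (by positivity)
        conv_lhs => rw [← this]
        ring
    _ = (η * ρ)⁻¹ * Real.sqrt ((1 / (n : ℝ)) * ∑ i, (μh (x i) - μ (x i)) ^ 2) *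
          Real.sqrt ((1 / (n : ℝ)) * ∑ i, (eh (x i) - e (x i)) ^ 2) := by
        rw [Real.sqrt_mul (by positivity), Real.sqrt_mul (by positivity)]
end

section
/- Let P be a probability measure on a measurable space 𝒳, K ≥ 2, M > 0, c > 0, q ≥ 1, H > 0, ε ≥ 0, and t ∈ (0,1). Let μ_1,…,μ_K : 𝒳 → ℝ be measurable with |μ_j(x)| ≤ M for all j, x, and let j* : 𝒳 → {1,…,K} be measurable with μ_{j*(x)}(x) = max_j μ_j(x) for all x. Assume the noise condition P({x : μ_{j*(x)}(x) − max_{j ≠ j*(x)} μ_j(x) ≤ M t}) ≤ c t^q. Let μ̃_1,…,μ̃_K : 𝒳 → ℝ be measurable with sup_x |μ̃_j(x) − μ_j(x)| ≤ ε for every j, and define the randomized policy π̃(x) = Softmax_H(μ̃_1(x),…,μ̃_K(x)). Then ∫_𝒳 [ μ_{j*(x)}(x) − Σ_{j=1}^K μ_j(x) π̃_j(x) ] dP(x) ≤ 2 c M t^q + M K² exp((−M t + 2ε)/H). (The bias bound (I₂) in the proof of Theorem 2.) -/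
open MeasureTheory

/-! Off the set where some suboptimal action comes within `Mt` of the best one, every suboptimal
action gets softmax weight at most `exp((−Mt + 2ε)/H)` (the estimates perturb each gap by at most
`2ε`), so the pointwise regret is at most `K · 2M · exp((−Mt + 2ε)/H)`; on that set the regret is
at most `2M`, and the noise condition bounds its probability by `c t^q`. -/

noncomputable def softmax {ι : Type*} [Fintype ι] (H : ℝ) (u : ι → ℝ) (j : ι) : ℝ :=
  Real.exp (u j / H) / ∑ k, Real.exp (u k / H)

section Softmax

variable {ι : Type*} [Fintype ι] (H : ℝ) (u : ι → ℝ)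

lemma softmax_nonneg (j : ι) : 0 ≤ softmax H u j := by
  unfold softmax; positivity

lemma sum_softmax [Nonempty ι] : ∑ j, softmax H u j = 1 := by
  have hpos : 0 < ∑ k, Real.exp (u k / H) :=
    Finset.sum_pos (fun k _ => Real.exp_pos _) Finset.univ_nonempty
  simp only [softmax]
  rw [← Finset.sum_div, div_self hpos.ne']

lemma softmax_le_exp_sub (i j : ι) : softmax H u j ≤ Real.exp ((u j - u i) / H) := by
  have hi : Real.exp (u i / H) ≤ ∑ k, Real.exp (u k / H) :=
    Finset.single_le_sum (f := fun k => Real.exp (u k / H)) (fun k _ => (Real.exp_pos _).le)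
      (Finset.mem_univ i)
  calc softmax H u j ≤ Real.exp (u j / H) / Real.exp (u i / H) := by
        unfold softmax; gcongr
    _ = Real.exp ((u j - u i) / H) := by rw [← Real.exp_sub, sub_div]

end Softmax

section Regret

variable {ι : Type*} [Fintype ι] {v π : ι → ℝ} {i : ι}

lemma sub_sum_mul_eq_sum_sub_mul (hπ : ∑ j, π j = 1) :
    v i - ∑ j, v j * π j = ∑ j, (v i - v j) * π j := by
  simp only [sub_mul, Finset.sum_sub_distrib, ← Finset.mul_sum, hπ, mul_one]

lemma sub_sum_mul_nonneg (hπ0 : ∀ j, 0 ≤ π j) (hπ : ∑ j, π j = 1) (hv : ∀ j, v j ≤ v i) :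
    0 ≤ v i - ∑ j, v j * π j := by
  rw [sub_sum_mul_eq_sum_sub_mul hπ]
  exact Finset.sum_nonneg fun j _ => mul_nonneg (sub_nonneg.mpr (hv j)) (hπ0 j)

lemma sub_sum_mul_le {D : ℝ} (hπ0 : ∀ j, 0 ≤ π j) (hπ : ∑ j, π j = 1)
    (hD : ∀ j, v i - v j ≤ D) : v i - ∑ j, v j * π j ≤ D := by
  rw [sub_sum_mul_eq_sum_sub_mul hπ]
  calc ∑ j, (v i - v j) * π j ≤ ∑ j, D * π j :=
        Finset.sum_le_sum fun j _ => mul_le_mul_of_nonneg_right (hD j) (hπ0 j)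
    _ = D := by rw [← Finset.mul_sum, hπ, mul_one]

lemma sub_sum_mul_le_card_mul {b : ℝ} (hπ : ∑ j, π j = 1) (hb : ∀ j, (v i - v j) * π j ≤ b) :
    v i - ∑ j, v j * π j ≤ Fintype.card ι * b := by
  rw [sub_sum_mul_eq_sum_sub_mul hπ]
  simpa using Finset.sum_le_sum (s := Finset.univ) fun j _ => hb j

lemma sub_sum_mul_softmax_le {u : ι → ℝ} {D δ ε H : ℝ} (hH : 0 < H)
    (hu : ∀ j, |u j - v j| ≤ ε) (hD : ∀ j, v i - v j ≤ D) (hδ : ∀ j ≠ i, δ < v i - v j) :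
    v i - ∑ j, v j * softmax H u j ≤
      Fintype.card ι * (D * Real.exp ((-δ + 2 * ε) / H)) := by
  have : Nonempty ι := ⟨i⟩
  have hD0 : 0 ≤ D := by simpa using hD i
  refine sub_sum_mul_le_card_mul (sum_softmax H u) fun j => ?_
  obtain rfl | hj := eq_or_ne j i
  · simp only [sub_self, zero_mul]; positivity
  have hweight : softmax H u j ≤ Real.exp ((-δ + 2 * ε) / H) := by
    refine (softmax_le_exp_sub H u i j).trans (Real.exp_le_exp.mpr ?_)
    gcongr
    linarith [abs_le.mp (hu j), abs_le.mp (hu i), hδ j hj]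
  calc (v i - v j) * softmax H u j ≤ D * softmax H u j :=
        mul_le_mul_of_nonneg_right (hD j) (softmax_nonneg H u j)
    _ ≤ D * Real.exp ((-δ + 2 * ε) / H) := mul_le_mul_of_nonneg_left hweight hD0

end Regret

lemma sub_sum_mul_softmax_le_sq {K : ℕ} (hK : 2 ≤ K) {v u : Fin K → ℝ} {i : Fin K}
    {M δ ε H : ℝ} (hH : 0 < H) (hv : ∀ j, |v j| ≤ M) (hu : ∀ j, |u j - v j| ≤ ε)
    (hδ : ∀ j ≠ i, δ < v i - v j) :
    v i - ∑ j, v j * softmax H u j ≤ M * K ^ 2 * Real.exp ((-δ + 2 * ε) / H) := by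
  have hgap : ∀ j, v i - v j ≤ 2 * M := fun j => by
    linarith [abs_le.mp (hv i), abs_le.mp (hv j)]
  have hME : 0 ≤ M * Real.exp ((-δ + 2 * ε) / H) :=
    mul_nonneg ((abs_nonneg _).trans (hv i)) (Real.exp_pos _).le
  have hK' : (2 : ℝ) ≤ K := by exact_mod_cast hK
  calc v i - ∑ j, v j * softmax H u j
      ≤ Fintype.card (Fin K) * (2 * M * Real.exp ((-δ + 2 * ε) / H)) :=
        sub_sum_mul_softmax_le hH hu hgap hδ
    _ = 2 * K * (M * Real.exp ((-δ + 2 * ε) / H)) := by rw [Fintype.card_fin]; ring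
    _ ≤ K * K * (M * Real.exp ((-δ + 2 * ε) / H)) := by gcongr
    _ = M * K ^ 2 * Real.exp ((-δ + 2 * ε) / H) := by ring

-- `A` is enlarged to a measurable hull of the same measure, and `integral_mono_of_nonneg` asks
-- for integrability of the upper bound only.
lemma integral_le_mul_measureReal_add {α : Type*} [MeasurableSpace α] {P : Measure α}
    [IsProbabilityMeasure P] {f : α → ℝ} {A : Set α} {a b : ℝ} (ha : 0 ≤ a)
    (hf0 : ∀ z, 0 ≤ f z) (hf : ∀ z, f z ≤ A.indicator (fun _ => a) z + b) :
    ∫ z, f z ∂P ≤ a * P.real A + b := by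
  set A' := toMeasurable P A
  have hA' : MeasurableSet A' := measurableSet_toMeasurable P A
  have hind : Integrable (A'.indicator fun _ => a) P := (integrable_const a).indicator hA'
  calc ∫ z, f z ∂P ≤ ∫ z, (A'.indicator (fun _ => a) z + b) ∂P := by
        refine integral_mono_of_nonneg (.of_forall hf0) (hind.add (integrable_const b))
          (.of_forall fun z => (hf z).trans ?_)
        exact add_le_add_left
          (Set.indicator_le_indicator_of_subset (subset_toMeasurable P A) (fun _ => ha) z) b
    _ = a * P.real A + b := by
        rw [integral_add hind (integrable_const b), integral_indicator_const _ hA',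
          integral_const, measureReal_def, measure_toMeasurable]
        simp [measureReal_def, mul_comm]

theorem stmt_14_general
    {𝒳 : Type*} [MeasurableSpace 𝒳]
    (P : Measure 𝒳) [IsProbabilityMeasure P]
    (K : ℕ) (hK : 2 ≤ K)
    (M c q H ε t : ℝ) (hM : 0 < M) (hc : 0 < c) (hH : 0 < H)
    (ht : t ∈ Set.Ioo (0:ℝ) 1)
    (μ : Fin K → 𝒳 → ℝ)
    (hμbdd : ∀ j z, |μ j z| ≤ M)
    (jstar : 𝒳 → Fin K)
    (hjmax : ∀ z j, μ j z ≤ μ (jstar z) z)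
    (hnoise : P {z | ∃ j, j ≠ jstar z ∧ μ (jstar z) z - μ j z ≤ M * t} ≤
      ENNReal.ofReal (c * t ^ q))
    (μt : Fin K → 𝒳 → ℝ)
    (hμt : ∀ j z, |μt j z - μ j z| ≤ ε)
    (πt : 𝒳 → Fin K → ℝ)
    (hπt : ∀ z j, πt z j = Real.exp (μt j z / H) / ∑ k, Real.exp (μt k z / H)) :
    (∫ z, (μ (jstar z) z - ∑ j, μ j z * πt z j) ∂P) ≤
      2 * c * M * t ^ q + M * K ^ 2 * Real.exp ((-(M * t) + 2 * ε) / H) := by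
  set A := {z | ∃ j, j ≠ jstar z ∧ μ (jstar z) z - μ j z ≤ M * t}
  set E := Real.exp ((-(M * t) + 2 * ε) / H)
  have : NeZero K := ⟨by omega⟩
  obtain rfl : πt = fun z => softmax H (μt · z) := funext fun z => funext (hπt z)
  have hregret : ∀ z, μ (jstar z) z - ∑ j, μ j z * softmax H (μt · z) j ≤
      A.indicator (fun _ => 2 * M) z + M * K ^ 2 * E := fun z => by
    by_cases hz : z ∈ A
    · rw [Set.indicator_of_mem hz]
      refine le_add_of_le_of_nonneg (sub_sum_mul_le (v := (μ · z)) (softmax_nonneg H _)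
        (sum_softmax H _) fun j => ?_) (by positivity)
      linarith [abs_le.mp (hμbdd (jstar z) z), abs_le.mp (hμbdd j z)]
    · rw [Set.indicator_of_notMem hz, zero_add]
      exact sub_sum_mul_softmax_le_sq hK hH (hμbdd · z) (hμt · z)
        fun j hj => lt_of_not_ge fun h => hz ⟨j, hj, h⟩
  have hPA : P.real A ≤ c * t ^ q :=
    ENNReal.toReal_le_of_le_ofReal (mul_nonneg hc.le (Real.rpow_nonneg ht.1.le q)) hnoise
  calc (∫ z, (μ (jstar z) z - ∑ j, μ j z * softmax H (μt · z) j) ∂P)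
      ≤ 2 * M * P.real A + M * K ^ 2 * E :=
        integral_le_mul_measureReal_add (by positivity)
          (fun z => sub_sum_mul_nonneg (softmax_nonneg H _) (sum_softmax H _) (hjmax z)) hregret
    _ ≤ 2 * M * (c * t ^ q) + M * K ^ 2 * E := by gcongr
    _ = 2 * c * M * t ^ q + M * K ^ 2 * E := by ring

/-- The bias bound `(I₂)` in the proof of Theorem 2: under the Tsybakov-type noise condition
(the set of covariates where the best-action gap is at most `Mt` has probability at most `c t^q`),
the temperature-`H` softmax policy built from `ε`-accurate estimates `μ̃_j` of the conditional
rewards `μ_j` has regret against the deterministic optimal policy at most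
`2cM t^q + M K² exp((−Mt + 2ε)/H)`. -/
theorem stmt_14
    {𝒳 : Type*} [MeasurableSpace 𝒳]
    (P : Measure 𝒳) [IsProbabilityMeasure P]
    (K : ℕ) (hK : 2 ≤ K)
    (M c q H ε t : ℝ) (hM : 0 < M) (hc : 0 < c) (hq : 1 ≤ q) (hH : 0 < H)
    (hε : 0 ≤ ε) (ht : t ∈ Set.Ioo (0:ℝ) 1)
    (μ : Fin K → 𝒳 → ℝ) (hμmeas : ∀ j, Measurable (μ j))
    (hμbdd : ∀ j z, |μ j z| ≤ M)
    (jstar : 𝒳 → Fin K) (hjmeas : Measurable jstar)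
    (hjmax : ∀ z j, μ j z ≤ μ (jstar z) z)
    (hnoise : P {z | ∃ j, j ≠ jstar z ∧ μ (jstar z) z - μ j z ≤ M * t} ≤
      ENNReal.ofReal (c * t ^ q))
    (μt : Fin K → 𝒳 → ℝ) (hμtmeas : ∀ j, Measurable (μt j))
    (hμt : ∀ j z, |μt j z - μ j z| ≤ ε)
    (πt : 𝒳 → Fin K → ℝ)
    (hπt : ∀ z j, πt z j = Real.exp (μt j z / H) / ∑ k, Real.exp (μt k z / H)) :
    (∫ z, (μ (jstar z) z - ∑ j, μ j z * πt z j) ∂P) ≤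
      2 * c * M * t ^ q + M * K ^ 2 * Real.exp ((-(M * t) + 2 * ε) / H) :=
  stmt_14_general P K hK M c q H ε t hM hc hH ht μ hμbdd jstar hjmax hnoise μt hμt πt hπt
end

section
/- Let M > 0, t > 0, let V ≥ 1 be an integer, and set I_j = [(j−1)/V, j/V] with midpoint A_j = (2j−1)/(2V) for j = 1,…,V. Let f : [0,1] → ℝ be M-Lipschitz, let A* ∈ [0,1] satisfy f(A*) ≥ f(A) for all A ∈ [0,1], and let j* be an index with A* ∈ I_{j*}. Let w : [0,1] → ℝ be integrable with w(A) ≥ η for a constant η > 0, and define the weighted averages f_{I_j} = (∫_{I_j} f(A) w(A) dA) / (∫_{I_j} w(A) dA). Suppose γ ∈ (0, 1/(2V)] is such that f(A*) − f(A) > M t whenever |A − A*| ≥ γ. Then for every j ≠ j*, f_{I_{j*}} − f_{I_j} ≥ M t − 3M/V. (The key gap estimate for interval-averaged rewards in the proof of Theorem 3.) -/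
/-!
Every point of the cell `I_j` lies within `1/(2V)` of its midpoint, and for `j ≠ j*` that
midpoint is at distance at least `1/(2V) ≥ γ` from `A* ∈ I_{j*}`. So the gap condition at the
midpoint and the Lipschitz bound give `f ≤ f(A*) − Mt + M/(2V)` on `I_j`, while the Lipschitz
bound alone gives `f ≥ f(A*) − M/V` on `I_{j*}`. Averages with positive weights inherit
pointwise bounds.
-/

open MeasureTheory Set

noncomputable def weightedSetAverage {α : Type*} [MeasurableSpace α] (μ : Measure α) (s : Set α)
    (f w : α → ℝ) : ℝ :=
  (∫ x in s, f x * w x ∂μ) / ∫ x in s, w x ∂μ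

section WeightedAverage

variable {α : Type*} [MeasurableSpace α] {μ : Measure α} {s : Set α} {f w : α → ℝ} {c η : ℝ}

lemma setIntegral_pos_of_pos_le (hs : MeasurableSet s) (hμs₀ : μ s ≠ 0) (hμs : μ s ≠ ⊤)
    (hη : 0 < η) (hw : ∀ x ∈ s, η ≤ w x) (hwi : IntegrableOn w s μ) :
    0 < ∫ x in s, w x ∂μ :=
  (mul_pos hη (ENNReal.toReal_pos hμs₀ hμs)).trans_le
    (setIntegral_ge_of_const_le_real hs hμs hw hwi)

variable (hs : MeasurableSet s) (hμs₀ : μ s ≠ 0) (hμs : μ s ≠ ⊤) (hη : 0 < η)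
  (hw : ∀ x ∈ s, η ≤ w x) (hwi : IntegrableOn w s μ)
  (hfwi : IntegrableOn (fun x => f x * w x) s μ)
include hs hμs₀ hμs hη hw hwi hfwi

lemma le_weightedSetAverage_of_forall_le (h : ∀ x ∈ s, c ≤ f x) :
    c ≤ weightedSetAverage μ s f w := by
  rw [weightedSetAverage, le_div_iff₀ (setIntegral_pos_of_pos_le hs hμs₀ hμs hη hw hwi),
    ← integral_const_mul]
  exact setIntegral_mono_on (hwi.const_mul c) hfwi hs fun x hx =>
    mul_le_mul_of_nonneg_right (h x hx) (hη.le.trans (hw x hx))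

lemma weightedSetAverage_le_of_forall_le (h : ∀ x ∈ s, f x ≤ c) :
    weightedSetAverage μ s f w ≤ c := by
  rw [weightedSetAverage, div_le_iff₀ (setIntegral_pos_of_pos_le hs hμs₀ hμs hη hw hwi),
    ← integral_const_mul]
  exact setIntegral_mono_on hfwi (hwi.const_mul c) hs fun x hx =>
    mul_le_mul_of_nonneg_right (h x hx) (hη.le.trans (hw x hx))

end WeightedAverage

/-- The cell `I_{k+1} = [k/V, (k+1)/V]` of the paper: cells are indexed from `0` here. -/
def gridCell (V k : ℕ) : Set ℝ := Icc ((k : ℝ) / V) (((k : ℝ) + 1) / V)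

noncomputable def gridMid (V k : ℕ) : ℝ := ((k : ℝ) + 1 / 2) / V

section Grid

variable {V k l : ℕ} {x y : ℝ}

lemma gridCell_subset_Icc (hk : k < V) : gridCell V k ⊆ Icc 0 1 := by
  have hV : (0 : ℝ) < V := by exact_mod_cast k.zero_le.trans_lt hk
  have hk' : (k : ℝ) + 1 ≤ V := by exact_mod_cast hk
  exact Icc_subset_Icc (by positivity) ((div_le_one hV).2 hk')

lemma volume_gridCell_ne_zero (hV : 0 < V) : volume (gridCell V k) ≠ 0 := by
  have hV' : (0 : ℝ) < V := by exact_mod_cast hV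
  rw [gridCell, Real.volume_Icc, ne_eq, ENNReal.ofReal_eq_zero, not_le, sub_pos]
  gcongr
  linarith

lemma abs_sub_le_of_mem_gridCell (hV : 0 < V) (hx : x ∈ gridCell V k) (hy : y ∈ gridCell V k) :
    |x - y| ≤ 1 / V := by
  have hV' : (0 : ℝ) < V := by exact_mod_cast hV
  have hwidth : ((k : ℝ) + 1) / V - k / V = 1 / V := by field_simp; ring
  rw [abs_le]
  constructor <;> linarith [hx.1, hx.2, hy.1, hy.2]

lemma gridMid_sub_half_width (hV : 0 < V) : gridMid V k - 1 / (2 * V) = k / V := by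
  have hV' : (0 : ℝ) < V := by exact_mod_cast hV
  unfold gridMid
  field_simp
  ring

lemma gridMid_add_half_width (hV : 0 < V) : gridMid V k + 1 / (2 * V) = (k + 1) / V := by
  have hV' : (0 : ℝ) < V := by exact_mod_cast hV
  unfold gridMid
  field_simp
  ring

lemma abs_sub_gridMid_le (hV : 0 < V) (hx : x ∈ gridCell V k) :
    |x - gridMid V k| ≤ 1 / (2 * V) := by
  rw [abs_le]
  constructor <;>
    linarith [hx.1, hx.2, gridMid_sub_half_width (k := k) hV, gridMid_add_half_width (k := k) hV]

lemma gridMid_mem_gridCell (hV : 0 < V) : gridMid V k ∈ gridCell V k := by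
  have hr : 0 < 1 / (2 * (V : ℝ)) := by positivity
  constructor <;>
    linarith [gridMid_sub_half_width (k := k) hV, gridMid_add_half_width (k := k) hV]

lemma le_abs_gridMid_sub (hV : 0 < V) (hkl : k ≠ l) (hy : y ∈ gridCell V l) :
    1 / (2 * V) ≤ |gridMid V k - y| := by
  have hr : 0 < 1 / (2 * (V : ℝ)) := by positivity
  rcases hkl.lt_or_gt with h | h
  · have hy' : ((k : ℝ) + 1) / V ≤ y := le_trans (by gcongr; exact_mod_cast h) hy.1
    rw [abs_sub_comm, abs_of_nonneg (by linarith [gridMid_add_half_width (k := k) hV])]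
    linarith [gridMid_add_half_width (k := k) hV]
  · have hy' : y ≤ (k : ℝ) / V := hy.2.trans (by gcongr; exact_mod_cast h)
    rw [abs_of_nonneg (by linarith [gridMid_sub_half_width (k := k) hV])]
    linarith [gridMid_sub_half_width (k := k) hV]

end Grid

lemma le_add_mul_of_abs_sub_le {s : Set ℝ} {f : ℝ → ℝ} {M r x y : ℝ}
    (hf : ∀ A ∈ s, ∀ B ∈ s, |f A - f B| ≤ M * |A - B|) (hM : 0 ≤ M) (hx : x ∈ s) (hy : y ∈ s)
    (hxy : |x - y| ≤ r) : f x ≤ f y + M * r := by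
  have := (le_abs_self _).trans ((hf x hx y hy).trans (mul_le_mul_of_nonneg_left hxy hM))
  linarith

theorem stmt_16_general
    (M t η γ : ℝ) (hM : 0 < M) (hη : 0 < η)
    (V : ℕ)
    (f w : ℝ → ℝ)
    (hf : ∀ A ∈ Set.Icc (0:ℝ) 1, ∀ B ∈ Set.Icc (0:ℝ) 1, |f A - f B| ≤ M * |A - B|)
    (Astar : ℝ) (hAstar : Astar ∈ Set.Icc (0:ℝ) 1)
    (jstar : Fin V)
    (hjstar : Astar ∈ Set.Icc (((jstar : ℕ) : ℝ) / V) ((((jstar : ℕ) : ℝ) + 1) / V))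
    (hw : ∀ A ∈ Set.Icc (0:ℝ) 1, η ≤ w A)
    (hwint : IntegrableOn w (Set.Icc (0:ℝ) 1))
    (hwfint : IntegrableOn (fun A => f A * w A) (Set.Icc (0:ℝ) 1))
    (fI : Fin V → ℝ)
    (hfI : ∀ j, fI j =
      (∫ A in Set.Icc (((j : ℕ) : ℝ) / V) ((((j : ℕ) : ℝ) + 1) / V), f A * w A) /
      (∫ A in Set.Icc (((j : ℕ) : ℝ) / V) ((((j : ℕ) : ℝ) + 1) / V), w A))
    (hγ : γ ∈ Set.Ioc (0:ℝ) (1 / (2 * V)))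
    (hgap : ∀ A ∈ Set.Icc (0:ℝ) 1, γ ≤ |A - Astar| → M * t < f Astar - f A) :
    ∀ j, j ≠ jstar → M * t - 3 * M / V ≤ fI jstar - fI j := by
  intro j hj
  have hV : 0 < V := jstar.pos
  have hV' : (0 : ℝ) < V := by exact_mod_cast hV
  have hcell (k : Fin V) : gridCell V k ⊆ Icc 0 1 := gridCell_subset_Icc k.isLt
  set c := gridMid V j
  have hc : c ∈ Icc 0 1 := hcell j (gridMid_mem_gridCell hV)
  have hfc : f c < f Astar - M * t := by
    have := hgap c hc (hγ.2.trans (le_abs_gridMid_sub hV (Fin.val_ne_of_ne hj) hjstar))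
    linarith
  have upper : fI j ≤ f Astar - M * t + M * (1 / (2 * V)) :=
    (hfI j).trans_le <| weightedSetAverage_le_of_forall_le measurableSet_Icc
      (volume_gridCell_ne_zero hV) measure_Icc_lt_top.ne hη (fun x hx => hw x (hcell j hx))
      (hwint.mono_set (hcell j)) (hwfint.mono_set (hcell j)) fun A hA => by
      linarith [le_add_mul_of_abs_sub_le hf hM.le (hcell j hA) hc (abs_sub_gridMid_le hV hA)]
  have lower : f Astar - M * (1 / V) ≤ fI jstar :=
    (hfI jstar).symm ▸ le_weightedSetAverage_of_forall_le measurableSet_Icc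
      (volume_gridCell_ne_zero hV) measure_Icc_lt_top.ne hη (fun x hx => hw x (hcell jstar hx))
      (hwint.mono_set (hcell jstar)) (hwfint.mono_set (hcell jstar)) fun A hA => by
      linarith [le_add_mul_of_abs_sub_le hf hM.le hAstar (hcell jstar hA)
        (abs_sub_le_of_mem_gridCell hV hjstar hA)]
  have hhalf : M * (1 / (2 * V)) ≤ M * (1 / V) := by gcongr; linarith
  have h3 : 3 * M / V = 3 * (M * (1 / V)) := by ring
  have hMV : 0 ≤ M * (1 / V) := by positivity
  linarith

/-- The key gap estimate for interval-averaged rewards in the proof of Theorem 3: if `f` is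
`M`-Lipschitz on `[0,1]`, maximized at `A* ∈ I_{j*}`, the maximizer gap condition
`f(A*) − f(A) > Mt` holds whenever `|A − A*| ≥ γ` with `γ ∈ (0, 1/(2V)]`, then the weighted
interval averages satisfy `f_{I_{j*}} − f_{I_j} ≥ Mt − 3M/V` for every `j ≠ j*`. Intervals are
indexed by `j : Fin V` with `I_j = [j/V, (j+1)/V]`. -/
theorem stmt_16
    (M t η γ : ℝ) (hM : 0 < M) (ht : 0 < t) (hη : 0 < η)
    (V : ℕ) (hV : 1 ≤ V)
    (f w : ℝ → ℝ)
    (hf : ∀ A ∈ Set.Icc (0:ℝ) 1, ∀ B ∈ Set.Icc (0:ℝ) 1, |f A - f B| ≤ M * |A - B|)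
    (Astar : ℝ) (hAstar : Astar ∈ Set.Icc (0:ℝ) 1)
    (hmax : ∀ A ∈ Set.Icc (0:ℝ) 1, f A ≤ f Astar)
    (jstar : Fin V)
    (hjstar : Astar ∈ Set.Icc (((jstar : ℕ) : ℝ) / V) ((((jstar : ℕ) : ℝ) + 1) / V))
    (hw : ∀ A ∈ Set.Icc (0:ℝ) 1, η ≤ w A)
    (hwint : IntegrableOn w (Set.Icc (0:ℝ) 1))
    (hwfint : IntegrableOn (fun A => f A * w A) (Set.Icc (0:ℝ) 1))
    (fI : Fin V → ℝ)
    (hfI : ∀ j, fI j =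
      (∫ A in Set.Icc (((j : ℕ) : ℝ) / V) ((((j : ℕ) : ℝ) + 1) / V), f A * w A) /
      (∫ A in Set.Icc (((j : ℕ) : ℝ) / V) ((((j : ℕ) : ℝ) + 1) / V), w A))
    (hγ : γ ∈ Set.Ioc (0:ℝ) (1 / (2 * V)))
    (hgap : ∀ A ∈ Set.Icc (0:ℝ) 1, γ ≤ |A - Astar| → M * t < f Astar - f A) :
    ∀ j, j ≠ jstar → M * t - 3 * M / V ≤ fI jstar - fI j :=
  stmt_16_general M t η γ hM hη V f w hf Astar hAstar jstar hjstar hw hwint hwfint fI hfI hγ hgap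
end
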